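/- arXiv:0907.5548 — 2 statements merged into one kernel-verified Lean document; each statement's English description precedes it below -/
import Mathlib

section
/- Let (F_ε) and (G_ε) be variationally equivalent families of functionals on a metric space X, and suppose (F_ε) Γ-converges as ε → 0 to a functional H : X → ℝ ∪ {∞}. Then (G_ε) also Γ-converges to H. -/
open Filter

noncomputable section

variable {X : Type*} [MetricSpace X]

/-- A sequence in a metric space is unbounded. -/
def SeqUnbounded {X : Type*} [MetricSpace X] (p : ℕ → X) : Prop :=
  ¬ Bornology.IsBounded (Set.range p)

/-- `PrecWith d G F`: the order relation `(G_ε) ⪯ (F_ε)` realized by the specific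
reparametrization `δ` (continuous and increasing on `[0,∞)` with `δ 0 = 0`):
for every sequence `εₙ → 0⁺` and every `(pₙ)` with `F_{εₙ}(pₙ) ≤ C`, there is `(qₙ)` with
`limsupₙ (G_{δ(εₙ)}(qₙ) − F_{εₙ}(pₙ)) ≤ 0` and either both sequences are unbounded or
`d(pₙ, qₙ) → 0`. Functionals take values in `ℝ ∪ {±∞}` (only `+∞` is relevant). -/
def PrecWith {X : Type*} [MetricSpace X] (δ : ℝ → ℝ) (G F : ℝ → X → EReal) : Prop :=
  ContinuousOn δ (Set.Ici 0) ∧ StrictMonoOn δ (Set.Ici 0) ∧ δ 0 = 0 ∧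
    ∀ ε : ℕ → ℝ, (∀ n, 0 < ε n) → Tendsto ε atTop (nhds 0) →
      ∀ p : ℕ → X, ∀ C : ℝ, (∀ n, F (ε n) (p n) ≤ (C : EReal)) →
        ∃ q : ℕ → X,
          limsup (fun n => G (δ (ε n)) (q n) - F (ε n) (p n)) atTop ≤ (0 : EReal) ∧
            ((SeqUnbounded p ∧ SeqUnbounded q) ∨
              Tendsto (fun n => dist (p n) (q n)) atTop (nhds 0))

/-- The order relation `(G_ε) ⪯ (F_ε)` between families of functionals. -/
def Prec {X : Type*} [MetricSpace X] (G F : ℝ → X → EReal) : Prop :=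
  ∃ δ : ℝ → ℝ, PrecWith δ G F

/-- Variational equivalence of two families of functionals:
`(F_ε) ≃ (G_ε)` iff `(F_ε) ⪯ (G_ε)` and `(G_ε) ⪯ (F_ε)`. -/
def VarEquiv {X : Type*} [MetricSpace X] (F G : ℝ → X → EReal) : Prop :=
  Prec F G ∧ Prec G F

/-- Equi-coercivity of a family of functionals: any sequence with bounded energy along a
vanishing sequence of scales is relatively compact. -/
def EquiCoercive {X : Type*} [MetricSpace X] (F : ℝ → X → EReal) : Prop :=
  ∀ ε : ℕ → ℝ, (∀ n, 0 < ε n) → Tendsto ε atTop (nhds 0) →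
    ∀ p : ℕ → X, ∀ C : ℝ, (∀ n, F (ε n) (p n) ≤ (C : EReal)) →
      IsCompact (closure (Set.range p))

/-- Γ-convergence of the family `(F_ε)` to `H` as `ε → 0`. -/
def GammaConv {X : Type*} [MetricSpace X] (F : ℝ → X → EReal) (H : X → EReal) : Prop :=
  (∀ ε : ℕ → ℝ, (∀ n, 0 < ε n) → Tendsto ε atTop (nhds 0) →
      ∀ p : ℕ → X, ∀ x : X, Tendsto p atTop (nhds x) →
        H x ≤ liminf (fun n => F (ε n) (p n)) atTop) ∧
    (∀ ε : ℕ → ℝ, (∀ n, 0 < ε n) → Tendsto ε atTop (nhds 0) →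
      ∀ x : X, ∃ p : ℕ → X, Tendsto p atTop (nhds x) ∧
        limsup (fun n => F (ε n) (p n)) atTop ≤ H x)

/-!
The two halves of Γ-convergence transfer separately. For the liminf inequality, pass to a
subsequence on which `G_{εₙ}(pₙ)` stays below a level `C`; then `F ⪯ G` supplies `qₙ` with
`F_{δ(εₙ)}(qₙ) ≲ G_{εₙ}(pₙ)`, and `qₙ → x` because the convergent sequence `pₙ` is bounded, which
rules out the unbounded alternative. For recovery sequences, invert `δ` to write `εₙ = δ(ηₙ)` with
`ηₙ → 0`, take a recovery sequence of `F` along `ηₙ` and transport it by `G ⪯ F`.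
-/

open Set Topology

theorem EReal.limsup_le_limsup_of_limsup_sub_nonpos {ι : Type*} {l : Filter ι} {f g : ι → EReal}
    (h : limsup (fun i => g i - f i) l ≤ 0) : limsup g l ≤ limsup f l := by
  refine EReal.le_of_forall_lt_iff_le.1 fun z hz => ?_
  obtain ⟨C, hfC, hCz⟩ := EReal.exists_between_coe_real hz
  have hCz' : C < z := by exact_mod_cast hCz
  have hf : ∀ᶠ i in l, f i < C := eventually_lt_of_limsup_lt hfC
  have hgf : ∀ᶠ i in l, g i - f i < ((z - C : ℝ) : EReal) :=
    eventually_lt_of_limsup_lt (h.trans_lt (EReal.coe_pos.2 (_root_.sub_pos.2 hCz')))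
  refine limsup_le_of_le (by isBoundedDefault) ?_
  filter_upwards [hf, hgf] with i hfi hgfi
  calc g i ≤ ((z - C : ℝ) : EReal) + f i :=
        (EReal.sub_le_iff_le_add (.inr (EReal.coe_ne_top _)) (.inl hfi.ne_top)).1 hgfi.le
    _ ≤ ((z - C : ℝ) : EReal) + C := add_le_add_right hfi.le _
    _ = z := by rw [← EReal.coe_add, _root_.sub_add_cancel]

theorem StrictMonoOn.tendsto_zero_of_tendsto_comp {ι : Type*} {l : Filter ι} {δ : ℝ → ℝ}
    (hm : StrictMonoOn δ (Ici 0)) (h0 : δ 0 = 0) {η : ι → ℝ} (hη : ∀ i, 0 ≤ η i)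
    (h : Tendsto (fun i => δ (η i)) l (𝓝 0)) : Tendsto η l (𝓝 0) := by
  refine tendsto_order.2 ⟨fun a ha => .of_forall fun i => ha.trans_le (hη i), fun b hb => ?_⟩
  have hδb : 0 < δ b := h0 ▸ hm self_mem_Ici hb.le hb
  filter_upwards [(tendsto_order.1 h).2 _ hδb] with i hi
  exact (hm.lt_iff_lt (hη i) hb.le).1 hi

theorem ContinuousOn.tendsto_comp_of_nonneg {ι : Type*} {l : Filter ι} {δ : ℝ → ℝ}
    (hc : ContinuousOn δ (Ici 0)) (h0 : δ 0 = 0) {ε : ι → ℝ} (hε0 : ∀ i, 0 ≤ ε i)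
    (hε : Tendsto ε l (𝓝 0)) : Tendsto (fun i => δ (ε i)) l (𝓝 0) :=
  h0 ▸ (hc 0 self_mem_Ici).tendsto.comp (tendsto_nhdsWithin_iff.2 ⟨hε, .of_forall hε0⟩)

/-- `δ` need not map onto `[0, ∞)`; only the terms `εₙ < δ 1` have preimages, hence `∀ᶠ`. -/
theorem exists_tendsto_zero_eventually_comp_eq {δ : ℝ → ℝ} (hc : ContinuousOn δ (Ici 0))
    (hm : StrictMonoOn δ (Ici 0)) (h0 : δ 0 = 0) {ε : ℕ → ℝ} (hpos : ∀ n, 0 < ε n)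
    (hε : Tendsto ε atTop (𝓝 0)) :
    ∃ η : ℕ → ℝ, (∀ n, 0 < η n) ∧ Tendsto η atTop (𝓝 0) ∧ ∀ᶠ n in atTop, δ (η n) = ε n := by
  have hex : ∀ n, ∃ s ∈ Ioc (0 : ℝ) 1, ε n < δ 1 → δ s = ε n := by
    intro n
    by_cases hn : ε n < δ 1
    · obtain ⟨s, hs, hδs⟩ := intermediate_value_Icc zero_le_one (hc.mono Icc_subset_Ici_self)
        ⟨h0.symm ▸ (hpos n).le, hn.le⟩
      have hs0 : s ≠ 0 := by rintro rfl; exact (hpos n).ne' (hδs ▸ h0)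
      exact ⟨s, ⟨lt_of_le_of_ne hs.1 hs0.symm, hs.2⟩, fun _ => hδs⟩
    · exact ⟨1, ⟨one_pos, le_rfl⟩, fun h => absurd h hn⟩
  choose η hη hδη using hex
  have hδ1 : 0 < δ 1 := h0 ▸ hm self_mem_Ici (mem_Ici.2 zero_le_one) one_pos
  have heq : ∀ᶠ n in atTop, δ (η n) = ε n := (hε.eventually_lt_const hδ1).mono hδη
  refine ⟨η, fun n => (hη n).1, ?_, heq⟩
  exact hm.tendsto_zero_of_tendsto_comp h0 (fun n => (hη n).1.le)
    (hε.congr' (heq.mono fun _ h => h.symm))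

section

variable {δ : ℝ → ℝ} {F G : ℝ → X → EReal} {ε : ℕ → ℝ} {p : ℕ → X} {x : X}

theorem PrecWith.exists_tendsto_limsup_le (h : PrecWith δ G F) (hpos : ∀ n, 0 < ε n)
    (hε : Tendsto ε atTop (𝓝 0)) (hp : Tendsto p atTop (𝓝 x)) {C : ℝ}
    (hC : ∀ n, F (ε n) (p n) ≤ C) :
    ∃ q : ℕ → X, Tendsto q atTop (𝓝 x) ∧
      limsup (fun n => G (δ (ε n)) (q n)) atTop ≤ limsup (fun n => F (ε n) (p n)) atTop := by
  obtain ⟨q, hlim, hq⟩ := h.2.2.2 ε hpos hε p C hC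
  have hdist : Tendsto (fun n => dist (p n) (q n)) atTop (𝓝 0) :=
    hq.resolve_left fun hu => hu.1 (Metric.isBounded_range_of_tendsto p hp)
  exact ⟨q, hp.congr_dist hdist, EReal.limsup_le_limsup_of_limsup_sub_nonpos hlim⟩

theorem PrecWith.exists_tendsto_limsup_le_of_ne_top (h : PrecWith δ G F) (hpos : ∀ n, 0 < ε n)
    (hε : Tendsto ε atTop (𝓝 0)) (hp : Tendsto p atTop (𝓝 x))
    (hfin : limsup (fun n => F (ε n) (p n)) atTop ≠ ⊤) :
    ∃ q : ℕ → X, Tendsto q atTop (𝓝 x) ∧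
      limsup (fun n => G (δ (ε n)) (q n)) atTop ≤ limsup (fun n => F (ε n) (p n)) atTop := by
  obtain ⟨C, hC, -⟩ := EReal.exists_between_coe_real hfin.lt_top
  obtain ⟨N, hN⟩ := eventually_atTop.1 (eventually_lt_of_limsup_lt hC)
  obtain ⟨q, hq, hlim⟩ := h.exists_tendsto_limsup_le (fun n => hpos (n + N))
    ((tendsto_add_atTop_iff_nat N).2 hε) ((tendsto_add_atTop_iff_nat N).2 hp)
    (C := C) fun n => (hN (n + N) (Nat.le_add_left N n)).le
  refine ⟨fun n => q (n - N), (tendsto_add_atTop_iff_nat N).1 (by simpa using hq), ?_⟩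
  rw [← limsup_nat_add _ N, ← limsup_nat_add (fun n => F (ε n) (p n)) N]
  simpa using hlim

end

def GammaLiminfIneq (F : ℝ → X → EReal) (H : X → EReal) : Prop :=
  ∀ ε : ℕ → ℝ, (∀ n, 0 < ε n) → Tendsto ε atTop (𝓝 0) →
    ∀ p : ℕ → X, ∀ x : X, Tendsto p atTop (𝓝 x) → H x ≤ liminf (fun n => F (ε n) (p n)) atTop

def GammaLimsupIneq (F : ℝ → X → EReal) (H : X → EReal) : Prop :=
  ∀ ε : ℕ → ℝ, (∀ n, 0 < ε n) → Tendsto ε atTop (𝓝 0) →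
    ∀ x : X, ∃ p : ℕ → X, Tendsto p atTop (𝓝 x) ∧ limsup (fun n => F (ε n) (p n)) atTop ≤ H x

section

variable {F G : ℝ → X → EReal} {H : X → EReal}

theorem GammaLiminfIneq.of_prec (hFG : Prec F G) (hF : GammaLiminfIneq F H) :
    GammaLiminfIneq G H := by
  obtain ⟨δ, hδ⟩ := hFG
  obtain ⟨hc, hm, h0, -⟩ := id hδ
  intro ε hpos hε p x hp
  refine EReal.le_of_forall_lt_iff_le.1 fun C hC => ?_
  obtain ⟨φ, hφ, hφC⟩ :=
    extraction_of_frequently_atTop (frequently_lt_of_liminf_lt (by isBoundedDefault) hC)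
  have hεφ : Tendsto (fun n => ε (φ n)) atTop (𝓝 0) := hε.comp hφ.tendsto_atTop
  obtain ⟨q, hq, hqp⟩ := hδ.exists_tendsto_limsup_le (fun n => hpos (φ n)) hεφ
    (hp.comp hφ.tendsto_atTop) fun n => (hφC n).le
  calc H x ≤ liminf (fun n => F (δ (ε (φ n))) (q n)) atTop :=
        hF _ (fun n => h0 ▸ hm self_mem_Ici (hpos (φ n)).le (hpos (φ n)))
          (hc.tendsto_comp_of_nonneg h0 (fun n => (hpos (φ n)).le) hεφ) q x hq
    _ ≤ limsup (fun n => F (δ (ε (φ n))) (q n)) atTop := liminf_le_limsup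
    _ ≤ limsup (fun n => G (ε (φ n)) (p (φ n))) atTop := hqp
    _ ≤ C := limsup_le_of_le (by isBoundedDefault) (.of_forall fun n => (hφC n).le)

theorem GammaLimsupIneq.of_prec (hGF : Prec G F) (hF : GammaLimsupIneq F H) :
    GammaLimsupIneq G H := by
  obtain ⟨δ, hδ⟩ := hGF
  obtain ⟨hc, hm, h0, -⟩ := id hδ
  intro ε hpos hε x
  by_cases hx : H x = ⊤
  · exact ⟨fun _ => x, tendsto_const_nhds, hx ▸ le_top⟩
  obtain ⟨η, hηpos, hη, hδη⟩ :=
    exists_tendsto_zero_eventually_comp_eq hc hm h0 hpos hε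
  obtain ⟨p, hp, hpH⟩ := hF η hηpos hη x
  obtain ⟨q, hq, hqp⟩ :=
    hδ.exists_tendsto_limsup_le_of_ne_top hηpos hη hp (ne_top_of_le_ne_top hx hpH)
  refine ⟨q, hq, le_trans (le_of_eq ?_) (hqp.trans hpH)⟩
  exact limsup_congr (hδη.mono fun n h => by rw [h])

end

/-- Variationally equivalent families share the same Γ-limit. -/
theorem gammaConv_of_varEquiv {X : Type*} [MetricSpace X]
    (F G : ℝ → X → EReal) (H : X → EReal)
    (hequiv : VarEquiv F G) (hgamma : GammaConv F H) :
    GammaConv G H :=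
  ⟨GammaLiminfIneq.of_prec hequiv.1 hgamma.1, GammaLimsupIneq.of_prec hequiv.2 hgamma.2⟩
end
end

section
/- There exist functionals F_ε on the Hilbert space ℓ² that Γ-converge to the squared norm functional H({aᵢ}) = ‖{aᵢ}‖²_{ℓ²} but are not variationally equivalent to the constant family H. Concretely, the functionals F_ε({aᵢ}) := Σ_{i ≠ ⌊1/ε⌋} aᵢ² Γ-converge to H as ε → 0, yet (F_ε) is not variationally equivalent to (H). -/
open Filter

noncomputable section

variable {X : Type*} [MetricSpace X]

/-- The functionals `F_ε({aᵢ}) = Σ_{i ≠ ⌊1/ε⌋} aᵢ²` on `ℓ²`. -/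
def Fell : ℝ → lp (fun _ : ℕ => ℝ) 2 → EReal := fun ε a =>
  ((∑' i : ℕ, if i = ⌊1 / ε⌋₊ then 0 else (a i) ^ 2 : ℝ) : EReal)

/-- The squared-norm functional `H({aᵢ}) = ‖{aᵢ}‖²_{ℓ²}`. -/
def Hell : lp (fun _ : ℕ => ℝ) 2 → EReal := fun a => ((‖a‖ ^ 2 : ℝ) : EReal)

/-!
`F_ε` differs from `H` only by the single coordinate `a ⌊1/ε⌋`, and along any convergent
sequence `pₙ → x` that coordinate tends to zero as `⌊1/εₙ⌋ → ∞`. So `F_ε` converges continuously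
to `H`, which gives Γ-convergence with constant recovery sequences. On the other hand the unit
vectors `e_{⌊1/εₙ⌋}` have zero `F_{εₙ}`-energy, while a sequence whose `H`-energy tends to zero
tends to zero; it is therefore neither unbounded nor asymptotically close to these bounded unit
vectors, so `(H) ⪯ (F_ε)` fails.
-/

open scoped ENNReal Topology

namespace lp

variable {α : Type*} {E : α → Type*} [∀ i, NormedAddCommGroup (E i)] {p : ℝ≥0∞}

theorem tendsto_norm_apply_cofinite (hp : 0 < p.toReal) (f : lp E p) :
    Tendsto (fun i => ‖f i‖) cofinite (𝓝 0) := by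
  have hsum := ((lp.memℓp f).summable hp).tendsto_cofinite_zero
  have hroot := (Real.continuousAt_rpow_const 0 p.toReal⁻¹ (Or.inr (inv_nonneg.2 hp.le))).tendsto
  convert hroot.comp hsum using 2 with i
  · simp [← Real.rpow_mul (norm_nonneg _), mul_inv_cancel₀ hp.ne']
  · simp [Real.zero_rpow (inv_ne_zero hp.ne')]

theorem tendsto_norm_apply_of_tendsto [Fact (1 ≤ p)] {ι : Type*} {l : Filter ι}
    (hp : p ≠ ∞) {F : ι → lp E p} {f : lp E p} (hF : Tendsto F l (𝓝 f)) {k : ι → α}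
    (hk : Tendsto k l cofinite) : Tendsto (fun n => ‖F n (k n)‖) l (𝓝 0) := by
  have hp0 : p ≠ 0 := (zero_lt_one.trans_le Fact.out).ne'
  have hbound : Tendsto (fun n => ‖F n - f‖ + ‖f (k n)‖) l (𝓝 0) := by
    simpa using (tendsto_iff_norm_sub_tendsto_zero.1 hF).add
      ((tendsto_norm_apply_cofinite (ENNReal.toReal_pos hp0 hp) f).comp hk)
  refine squeeze_zero (fun _ => norm_nonneg _) (fun n => ?_) hbound
  calc ‖F n (k n)‖ ≤ ‖f (k n)‖ + ‖F n (k n) - f (k n)‖ := norm_le_norm_add_norm_sub' _ _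
    _ ≤ ‖f (k n)‖ + ‖F n - f‖ := by
        gcongr; simpa using norm_apply_le_norm hp0 (F n - f) (k n)
    _ = ‖F n - f‖ + ‖f (k n)‖ := add_comm _ _

end lp

theorem lp.summable_sq {ι : Type*} (a : lp (fun _ : ι => ℝ) 2) : Summable fun i => a i ^ 2 := by
  simpa [Real.rpow_natCast, sq_abs] using (lp.memℓp a).summable (p := 2) (by norm_num)

theorem lp.norm_sq_eq_tsum_sq {ι : Type*} (a : lp (fun _ : ι => ℝ) 2) :
    ‖a‖ ^ 2 = ∑' i, a i ^ 2 := by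
  simpa [Real.rpow_natCast, sq_abs] using lp.norm_rpow_eq_tsum (p := 2) (by norm_num) a

local notation "ℓ²" => lp (fun _ : ℕ => ℝ) 2

theorem Fell_eq (ε : ℝ) (a : ℓ²) : Fell ε a = ((‖a‖ ^ 2 - a ⌊1 / ε⌋₊ ^ 2 : ℝ) : EReal) := by
  rw [Fell, lp.norm_sq_eq_tsum_sq, (lp.summable_sq a).tsum_eq_add_tsum_ite ⌊1 / ε⌋₊,
    add_sub_cancel_left]

theorem tendsto_natFloor_one_div {ι : Type*} {l : Filter ι} {ε : ι → ℝ} (hpos : ∀ n, 0 < ε n)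
    (hε : Tendsto ε l (𝓝 0)) : Tendsto (fun n => ⌊1 / ε n⌋₊) l atTop := by
  simp only [one_div]
  exact tendsto_nat_floor_atTop.comp <| tendsto_inv_nhdsGT_zero.comp <|
    tendsto_nhdsWithin_of_tendsto_nhds_of_eventually_within _ hε (Eventually.of_forall hpos)

theorem tendsto_Fell (ε : ℕ → ℝ) (hpos : ∀ n, 0 < ε n) (hε : Tendsto ε atTop (𝓝 0))
    {p : ℕ → ℓ²} {x : ℓ²} (hp : Tendsto p atTop (𝓝 x)) :
    Tendsto (fun n => Fell (ε n) (p n)) atTop (𝓝 (Hell x)) := by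
  have hcoord : Tendsto (fun n => ‖p n ⌊1 / ε n⌋₊‖) atTop (𝓝 0) :=
    lp.tendsto_norm_apply_of_tendsto (by simp) hp
      (Nat.cofinite_eq_atTop ▸ tendsto_natFloor_one_div hpos hε)
  have hreal : Tendsto (fun n => ‖p n‖ ^ 2 - p n ⌊1 / ε n⌋₊ ^ 2) atTop (𝓝 (‖x‖ ^ 2)) := by
    simpa using (hp.norm.pow 2).sub (hcoord.pow 2)
  simpa only [Fell_eq, Hell] using EReal.tendsto_coe.2 hreal

theorem gammaConv_of_tendsto {X : Type*} [MetricSpace X] {F : ℝ → X → EReal} {H : X → EReal}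
    (hF : ∀ ε : ℕ → ℝ, (∀ n, 0 < ε n) → Tendsto ε atTop (𝓝 0) →
      ∀ p : ℕ → X, ∀ x : X, Tendsto p atTop (𝓝 x) →
        Tendsto (fun n => F (ε n) (p n)) atTop (𝓝 (H x))) :
    GammaConv F H :=
  ⟨fun ε hpos hε p x hp => (hF ε hpos hε p x hp).liminf_eq.ge,
    fun ε hpos hε x => ⟨fun _ => x, tendsto_const_nhds,
      (hF ε hpos hε _ x tendsto_const_nhds).limsup_eq.le⟩⟩

theorem Fell_single_floor (ε c : ℝ) : Fell ε (lp.single 2 ⌊1 / ε⌋₊ c) = 0 := by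
  rw [Fell_eq, lp.norm_single (by norm_num), lp.single_apply_self, Real.norm_eq_abs, sq_abs,
    sub_self, EReal.coe_zero]

theorem tendsto_zero_of_limsup_Hell_le_zero {ι : Type*} {l : Filter ι} {q : ι → ℓ²}
    (hq : limsup (fun n => Hell (q n)) l ≤ 0) : Tendsto q l (𝓝 0) := by
  have hH : Tendsto (fun n => Hell (q n)) l (𝓝 0) :=
    tendsto_of_le_liminf_of_limsup_le
      (le_liminf_of_le (by isBoundedDefault) (Eventually.of_forall fun n => by
        simp only [Hell]; exact_mod_cast sq_nonneg ‖q n‖)) hq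
  have hsq : Tendsto (fun n => ‖q n‖ ^ 2) l (𝓝 0) := by
    simpa using EReal.tendsto_coe.1 hH
  rw [tendsto_zero_iff_norm_tendsto_zero]
  simpa [Real.sqrt_sq (norm_nonneg _)] using hsq.sqrt

theorem not_prec_Hell_Fell : ¬ Prec (fun _ => Hell) Fell := by
  rintro ⟨_, -, -, -, hprec⟩
  set ε : ℕ → ℝ := fun n => 1 / ((n : ℝ) + 1)
  set p : ℕ → ℓ² := fun n => lp.single 2 ⌊1 / ε n⌋₊ 1
  have hp_norm (n : ℕ) : ‖p n‖ = 1 := by simp [p, lp.norm_single]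
  obtain ⟨q, hlim, hpq⟩ := hprec ε (fun n => by positivity)
    tendsto_one_div_add_atTop_nhds_zero_nat p 0 (fun n => (Fell_single_floor _ _).le)
  have hq : Tendsto q atTop (𝓝 0) :=
    tendsto_zero_of_limsup_Hell_le_zero <| by
      simpa only [p, Fell_single_floor, sub_zero] using hlim
  rcases hpq with ⟨hp_unbounded, -⟩ | hdist
  · exact hp_unbounded <| isBounded_iff_forall_norm_le.2
      ⟨1, by rintro _ ⟨n, rfl⟩; exact (hp_norm n).le⟩
  · have hp : Tendsto (fun n => ‖p n‖) atTop (𝓝 0) := by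
      simpa using (hq.congr_dist (by simpa only [dist_comm] using hdist)).norm
    simp [hp_norm] at hp

/-- The functionals `F_ε({aᵢ}) = Σ_{i ≠ ⌊1/ε⌋} aᵢ²` Γ-converge on `ℓ²` to the squared norm
`H`, but `(F_ε)` is not variationally equivalent to the constant family `H`: the
equi-coercivity hypothesis cannot be dropped in the theorem relating Γ-convergence and
variational equivalence. -/
theorem gammaConv_not_varEquiv_counterexample :
    GammaConv Fell Hell ∧ ¬ VarEquiv Fell (fun _ => Hell) :=
  ⟨gammaConv_of_tendsto fun ε hpos hε _ _ hp => tendsto_Fell ε hpos hε hp,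
    fun h => not_prec_Hell_Fell h.2⟩
end
end
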